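/- Let A, C, q ∈ ℂ with 0 < |q| < 1, and let (a_n)_{n≥0} be a sequence of complex numbers satisfying a_1 = a_0^2 + (A + C)·a_0 and (n+1)·a_{n+1} = A·q^n·a_n + Σ_{i+j=n} a_i·a_j + C·a_n for all n ≥ 1 (the sum over pairs (i,j) of nonnegative integers with i + j = n). If β := |a_0| > 1, then |a_n| ≤ β^{n+1}·(|A| + |C| + β)^n for all n ≥ 0. -/

import Mathlib

/-! The recurrence at `n = 0` is exactly the formula for `a₁`, so it holds for every `n`.
With `β = ‖a₀‖` and `ρ = β (‖A‖ + ‖C‖ + β)` one proves `‖aₙ‖ ≤ β ρⁿ` by strong induction: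
the convolution sum has `n + 1` terms, each at most `β² ρⁿ`, and since `‖q‖ ≤ 1` and `β ≥ 1`,
`(‖A‖ + ‖C‖) β ρⁿ + (n + 1) β² ρⁿ ≤ (n + 1) β ρⁿ⁺¹`. -/

open Finset

lemma norm_sum_antidiagonal_mul_le {R : Type*} [SeminormedRing R] {a : ℕ → R} {c ρ : ℝ} {n : ℕ}
    (ha : ∀ i ≤ n, ‖a i‖ ≤ c * ρ ^ i) :
    ‖∑ p ∈ antidiagonal n, a p.1 * a p.2‖ ≤ (n + 1) * (c ^ 2 * ρ ^ n) := by
  calc ‖∑ p ∈ antidiagonal n, a p.1 * a p.2‖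
      ≤ ∑ p ∈ antidiagonal n, ‖a p.1‖ * ‖a p.2‖ :=
        (norm_sum_le _ _).trans (sum_le_sum fun p _ => norm_mul_le _ _)
    _ ≤ ∑ _p ∈ antidiagonal n, c ^ 2 * ρ ^ n := by
        refine sum_le_sum fun p hp => ?_
        rw [HasAntidiagonal.mem_antidiagonal] at hp
        calc ‖a p.1‖ * ‖a p.2‖ ≤ (c * ρ ^ p.1) * (c * ρ ^ p.2) :=
              mul_le_mul (ha _ (by omega)) (ha _ (by omega)) (norm_nonneg _)
                ((norm_nonneg _).trans (ha _ (by omega)))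
          _ = c ^ 2 * ρ ^ n := by rw [← hp]; ring
    _ = (n + 1) * (c ^ 2 * ρ ^ n) := by simp [Finset.Nat.card_antidiagonal]

theorem norm_le_geometric_of_recurrence {𝕜 : Type*} [RCLike 𝕜] {A C q : 𝕜} {a : ℕ → 𝕜}
    (hq : ‖q‖ ≤ 1)
    (hrec : ∀ n : ℕ, ((n : 𝕜) + 1) * a (n + 1) =
        A * q ^ n * a n + (∑ p ∈ antidiagonal n, a p.1 * a p.2) + C * a n)
    (ha0 : 1 ≤ ‖a 0‖) (n : ℕ) :
    ‖a n‖ ≤ ‖a 0‖ * (‖a 0‖ * (‖A‖ + ‖C‖ + ‖a 0‖)) ^ n := by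
  set β := ‖a 0‖
  set s := ‖A‖ + ‖C‖
  set ρ := β * (s + β)
  have hs : 0 ≤ s := by positivity
  induction n using Nat.strong_induction_on with
  | _ n ih =>
  cases n with
  | zero => simp [β]
  | succ k =>
    have hk : ‖a k‖ ≤ β * ρ ^ k := ih k k.lt_succ_self
    have hsum := norm_sum_antidiagonal_mul_le (fun i (hi : i ≤ k) => ih i (by omega))
    have hnorm : (k + 1) * ‖a (k + 1)‖ ≤ s * (β * ρ ^ k) + (k + 1) * (β ^ 2 * ρ ^ k) := by
      have hcoef : ‖(k : 𝕜) + 1‖ = k + 1 := by exact_mod_cast RCLike.norm_natCast (K := 𝕜) (k + 1)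
      have hqk : ‖A * q ^ k * a k‖ ≤ ‖A‖ * ‖a k‖ := by
        rw [norm_mul, norm_mul, norm_pow]
        exact mul_le_mul_of_nonneg_right
          (mul_le_of_le_one_right (norm_nonneg _) (pow_le_one₀ (norm_nonneg _) hq)) (norm_nonneg _)
      calc (k + 1) * ‖a (k + 1)‖
          = ‖A * q ^ k * a k + (∑ p ∈ antidiagonal k, a p.1 * a p.2) + C * a k‖ := by
            rw [← hrec k, norm_mul, hcoef]
        _ ≤ ‖A * q ^ k * a k‖ + ‖∑ p ∈ antidiagonal k, a p.1 * a p.2‖ + ‖C * a k‖ :=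
            norm_add₃_le
        _ ≤ ‖A‖ * ‖a k‖ + (k + 1) * (β ^ 2 * ρ ^ k) + ‖C‖ * ‖a k‖ := by
            gcongr
            exact norm_mul_le _ _
        _ ≤ s * (β * ρ ^ k) + (k + 1) * (β ^ 2 * ρ ^ k) := by
            have := mul_le_mul_of_nonneg_left hk hs
            linarith
    have hgrowth : s * (β * ρ ^ k) + (k + 1) * (β ^ 2 * ρ ^ k) ≤ (k + 1) * (β * ρ ^ (k + 1)) := by
      calc s * (β * ρ ^ k) + (k + 1) * (β ^ 2 * ρ ^ k) = β * ρ ^ k * (s + (k + 1) * β) := by ring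
        _ ≤ β * ρ ^ k * ((k + 1) * β * (s + β)) := by
            gcongr
            have hkβ : 1 ≤ (k + 1) * β := by nlinarith
            nlinarith [mul_nonneg hs (sub_nonneg.2 hkβ),
              mul_nonneg (by positivity : (0 : ℝ) ≤ (k + 1) * β) (sub_nonneg.2 ha0)]
        _ = (k + 1) * (β * ρ ^ (k + 1)) := by ring
    exact le_of_mul_le_mul_left (hnorm.trans hgrowth) (by positivity)

theorem stmt14_general (A C q : ℂ) (hq1 : ‖q‖ < 1)
    (a : ℕ → ℂ)
    (h1 : a 1 = (a 0) ^ 2 + (A + C) * a 0)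
    (hrec : ∀ n : ℕ, 1 ≤ n →
      ((n : ℂ) + 1) * a (n + 1) =
        A * q ^ n * a n + (∑ p ∈ Finset.HasAntidiagonal.antidiagonal n, a p.1 * a p.2) + C * a n)
    (ha0 : 1 < ‖a 0‖) :
    ∀ n : ℕ, ‖a n‖ ≤
      ‖a 0‖ ^ (n + 1) *
        (‖A‖ + ‖C‖ + ‖a 0‖) ^ n := by
  have hrec_all : ∀ n : ℕ, ((n : ℂ) + 1) * a (n + 1) =
      A * q ^ n * a n + (∑ p ∈ antidiagonal n, a p.1 * a p.2) + C * a n := by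
    rintro (_ | n)
    · simp only [CharP.cast_eq_zero, zero_add, h1, one_mul, pow_zero, mul_one,
        HasAntidiagonal.antidiagonal_zero, sum_singleton]
      ring
    · exact hrec (n + 1) n.succ_pos
  intro n
  calc ‖a n‖ ≤ ‖a 0‖ * (‖a 0‖ * (‖A‖ + ‖C‖ + ‖a 0‖)) ^ n :=
        norm_le_geometric_of_recurrence hq1.le hrec_all ha0.le n
    _ = ‖a 0‖ ^ (n + 1) * (‖A‖ + ‖C‖ + ‖a 0‖) ^ n := by rw [mul_pow, pow_succ]; ring

/-- If `0 < |q| < 1`, `(a n)` satisfies `a₁ = a₀² + (A+C) a₀` and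
`(n+1) a_{n+1} = A qⁿ a_n + Σ_{i+j=n} a_i a_j + C a_n` for all `n ≥ 1`, and
`β := |a₀| > 1`, then `|a_n| ≤ β^{n+1} (|A| + |C| + β)ⁿ` for all `n`. -/
theorem stmt14 (A C q : ℂ) (hq0 : 0 < ‖q‖) (hq1 : ‖q‖ < 1)
    (a : ℕ → ℂ)
    (h1 : a 1 = (a 0) ^ 2 + (A + C) * a 0)
    (hrec : ∀ n : ℕ, 1 ≤ n →
      ((n : ℂ) + 1) * a (n + 1) =
        A * q ^ n * a n + (∑ p ∈ Finset.HasAntidiagonal.antidiagonal n, a p.1 * a p.2) + C * a n)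
    (ha0 : 1 < ‖a 0‖) :
    ∀ n : ℕ, ‖a n‖ ≤
      ‖a 0‖ ^ (n + 1) *
        (‖A‖ + ‖C‖ + ‖a 0‖) ^ n :=
  stmt14_general A C q hq1 a h1 hrec ha0
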